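/- arXiv:1702.08816 — 2 statements merged into one kernel-verified Lean document; each statement's English description precedes it below -/
import Mathlib

section
/- Let R be a semiprime associative algebra, let a ∈ R, and let s ∈ R be such that the image s̄ of s in the local algebra R_a is a regular element of R_a. Then the left ideal L(as) = Ras + l_R(a), where l_R(a) is the left annihilator of a in R, satisfies Ras ∩ l_R(a) = 0. -/
/-- Let `R` be a semiprime associative algebra, `a ∈ R`, and
`s ∈ R` whose image `s̄` in the local algebra `R_a` (the homotope product
`x ⬝ y = x*a*y` modulo `Ker a = {x | a*x*a = 0}`) is regular, i.e. neither a
left nor a right zero divisor of `R_a`. Then `Ras ∩ l_R(a) = 0`, where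
`l_R(a) = {x | x*a = 0}` is the left annihilator of `a`. -/
theorem stmt_0 {R : Type*} [Ring R]
    (hsemiprime : ∀ x : R, (∀ r : R, x * r * x = 0) → x = 0)
    (a s : R)
    -- `s̄` is not a left zero divisor in `R_a`
    (hreg_left : ∀ x : R, a * (s * (a * x)) * a = 0 → a * x * a = 0)
    -- `s̄` is not a right zero divisor in `R_a`
    (hreg_right : ∀ x : R, a * (x * (a * s)) * a = 0 → a * x * a = 0) :
    ∀ x : R, x * (a * s) * a = 0 → x * (a * s) = 0 := by
  intro x hx
  apply hsemiprime
  intro r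
  have h1 : a * (s * r * x) * a = 0 := by
    apply hreg_right
    have : a * (s * r * x * (a * s)) * a = a * s * r * (x * (a * s) * a) := by noncomm_ring
    rw [this, hx, mul_zero]
  calc x * (a * s) * r * (x * (a * s)) = x * (a * (s * r * x) * a) * s := by noncomm_ring
    _ = 0 := by rw [h1, mul_zero, zero_mul]
end

section
/- Let R be a semiprime associative algebra, let a ∈ R, and let s ∈ R be such that the image of s in R_a is regular in R_a. If x ∈ R satisfies xas = 0, then xa = 0. Consequently the map f_s : Ras + l_R(a) → R given by f_s(xas + z) = xa (for x ∈ R, z ∈ l_R(a)) is a well-defined homomorphism of left R-modules. -/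
/-- Let `R` be a semiprime associative algebra, `a ∈ R`, and
`s ∈ R` whose image in the local algebra `R_a` (homotope product `x*a*y`
modulo `{x | a*x*a = 0}`) is regular. Then `x*a*s = 0` implies `x*a = 0`, and
consequently the assignment `x*(a*s) + z ↦ x*a` (for `z` in the left
annihilator `l_R(a)`) gives a well-defined homomorphism of left `R`-modules
`f_s : L(as) = Ras + l_R(a) → R`.  Here `mulRightA` is right multiplication
by `a`, as a left `R`-module map, so that `ker mulRightA = l_R(a)`. -/
theorem stmt_1 {R : Type*} [Ring R]
    (hsemiprime : ∀ x : R, (∀ r : R, x * r * x = 0) → x = 0)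
    (a s : R)
    (hreg_left : ∀ x : R, a * (s * (a * x)) * a = 0 → a * x * a = 0)
    (hreg_right : ∀ x : R, a * (x * (a * s)) * a = 0 → a * x * a = 0)
    (mulRightA : R →ₗ[R] R) (hmul : ∀ x : R, mulRightA x = x * a) :
    (∀ x : R, x * (a * s) = 0 → x * a = 0) ∧
      ∃ f : ↥(Submodule.span R {a * s} ⊔ LinearMap.ker mulRightA) →ₗ[R] R,
        ∀ (y : ↥(Submodule.span R {a * s} ⊔ LinearMap.ker mulRightA)) (x z : R),
          z * a = 0 → (y : R) = x * (a * s) + z → f y = x * a := by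
  -- Key lemma: w*(a*s)*a = 0 → w*a = 0
  have key : ∀ w : R, w * (a * s) * a = 0 → w * a = 0 := by
    intro w hw
    apply hsemiprime
    intro r
    have h1 : a * (r * w) * a = 0 := by
      apply hreg_right
      simp only [mul_assoc] at hw ⊢
      simp [hw]
    simp only [mul_assoc] at h1 ⊢
    rw [h1, mul_zero]
  have part1 : ∀ x : R, x * (a * s) = 0 → x * a = 0 := by
    intro x hx
    exact key x (by rw [hx, zero_mul])
  refine ⟨part1, ?_⟩
  set M := Submodule.span R {a * s} ⊔ LinearMap.ker mulRightA with hM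
  -- decomposition of elements of M
  have hdecomp : ∀ y : M, ∃ x z : R, z * a = 0 ∧ (y : R) = x * (a * s) + z := by
    intro y
    obtain ⟨p, hp, q, hq, hpq⟩ := Submodule.mem_sup.mp y.2
    obtain ⟨c, hc⟩ := Submodule.mem_span_singleton.mp hp
    refine ⟨c, q, ?_, ?_⟩
    · have := LinearMap.mem_ker.mp hq
      rwa [hmul] at this
    · rw [← hpq, ← hc]; simp [smul_eq_mul]
  -- well-definedness
  have wd : ∀ x z x' z' : R, z * a = 0 → z' * a = 0 →
      x * (a * s) + z = x' * (a * s) + z' → x * a = x' * a := by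
    intro x z x' z' hz hz' h
    have h1 : (x - x') * (a * s) * a = 0 := by
      have h2 : (x * (a * s) + z) * a = (x' * (a * s) + z') * a := by rw [h]
      simp only [add_mul, hz, hz', add_zero] at h2
      simp [sub_mul, h2]
    have := key _ h1
    rw [sub_mul, sub_eq_zero] at this
    exact this
  classical
  let g : M → R := fun y => Classical.choose (hdecomp y) * a
  have hg : ∀ (y : M) (x z : R), z * a = 0 → (y : R) = x * (a * s) + z → g y = x * a := by
    intro y x z hz hy
    obtain ⟨z0, hz0, hy0⟩ := Classical.choose_spec (hdecomp y)
    exact wd _ z0 x z hz0 hz (by rw [← hy0, hy])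
  have gadd : ∀ y y' : M, g (y + y') = g y + g y' := by
    intro y y'
    obtain ⟨x1, z1, hz1, hy1⟩ := hdecomp y
    obtain ⟨x2, z2, hz2, hy2⟩ := hdecomp y'
    rw [hg y x1 z1 hz1 hy1, hg y' x2 z2 hz2 hy2,
      hg (y + y') (x1 + x2) (z1 + z2) (by rw [add_mul, hz1, hz2, add_zero])
        (by push_cast [hy1, hy2]; noncomm_ring), add_mul]
  have gsmul : ∀ (r : R) (y : M), g (r • y) = r • g y := by
    intro r y
    obtain ⟨x1, z1, hz1, hy1⟩ := hdecomp y
    rw [hg y x1 z1 hz1 hy1,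
      hg (r • y) (r * x1) (r * z1) (by rw [mul_assoc, hz1, mul_zero])
        (by push_cast [hy1]; rw [smul_eq_mul, mul_add, mul_assoc]), smul_eq_mul, mul_assoc]
  exact ⟨⟨⟨g, gadd⟩, gsmul⟩, hg⟩
end
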